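/- arXiv:2210.02020 — 2 statements merged into one kernel-verified Lean document; each statement's English description precedes it below -/
import Mathlib

section
/- Let ξ₁, ξ₂ be orthogonal complementary subspaces of ℝⁿ, K₁ ⊆ ξ₁, K₂ ⊆ ξ₂ convex bodies containing the origin in their relative interiors, and suppose y₁ ∈ relbd K₁ and y₂ ∈ relint K₂. If y₁ + y₂ is a boundary point of K₁ + K₂ with a unique outer unit normal, then ν_{K₁+K₂}(y₁+y₂) = ν_{K₁}(y₁), i.e., the outer unit normal lies in ξ₁ and equals the outer unit normal of K₁ at y₁ relative to ξ₁. -/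
noncomputable section

open MeasureTheory Set Metric
open scoped RealInnerProductSpace ENNReal Pointwise Classical

/-- Euclidean `n`-space. -/
abbrev E (n : ℕ) := EuclideanSpace ℝ (Fin n)

/-- The support function of a set `K ⊆ ℝⁿ`. -/
def suppFn {n : ℕ} (K : Set (E n)) (x : E n) : ℝ :=
  sSup ((fun y => ⟪y, x⟫) '' K)

/-- The Gauss map of `K`: at a boundary point with a unique outer unit normal it returns
that normal, otherwise `0`. -/
def gaussMap {n : ℕ} (K : Set (E n)) (x : E n) : E n :=
  if h : ∃! u : E n, ‖u‖ = 1 ∧ ⟪x, u⟫ = suppFn K u then h.choose else 0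

/-- The Gauss map of a convex body `K` lying in a subspace `ξ`, relative to `ξ`. -/
def relGaussMap {n : ℕ} (ξ : Submodule ℝ (E n)) (K : Set (E n)) (x : E n) : E n :=
  if h : ∃! u : E n, u ∈ ξ ∧ ‖u‖ = 1 ∧ ⟪x, u⟫ = suppFn K u then h.choose else 0

/-!
The outer unit normal `u` at `y₁ + y₂` is maximised over `K₁` at `y₁` and over `K₂` at `y₂`.
A linear functional maximised at a relative interior point is constant, so `⟪·, u⟫` is constant
on `K₂`, and it vanishes there because `0 ∈ K₂`. Hence reflecting `u` in `ξ₁` does not change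
`⟪·, u⟫` on `K₁ + K₂`: the reflected vector is again an outer unit normal at `y₁ + y₂`, and by
uniqueness `u` is fixed by the reflection, i.e. `u ∈ ξ₁`. For directions `w ∈ ξ₁` the conditions
"normal to `K₁ + K₂` at `y₁ + y₂`" and "normal to `K₁` at `y₁`" coincide, so `u` is also the
unique relative normal of `K₁` at `y₁`.
-/

section IntrinsicInterior

variable {V P : Type*} [NormedAddCommGroup V] [NormedSpace ℝ V] [MetricSpace P]
  [NormedAddTorsor V P] {K : Set P} {y z : P}

theorem exists_one_lt_lineMap_mem_of_mem_intrinsicInterior (hy : y ∈ K)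
    (hz : z ∈ intrinsicInterior ℝ K) : ∃ t : ℝ, 1 < t ∧ AffineMap.lineMap y z t ∈ K := by
  obtain ⟨z', hz', rfl⟩ := mem_intrinsicInterior.mp hz
  let g : ℝ → affineSpan ℝ K := fun t =>
    ⟨AffineMap.lineMap y z' t, AffineMap.lineMap_mem _ (subset_affineSpan ℝ K hy) z'.2⟩
  have hg : Continuous g := AffineMap.lineMap_continuous.subtype_mk _
  have hg1 : g 1 = z' := Subtype.ext (AffineMap.lineMap_apply_one _ _)
  obtain ⟨t, ht1, ht⟩ := (hg.tendsto' 1 z' hg1).eventually_mem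
    (mem_interior_iff_mem_nhds.1 hz') |>.exists_gt
  exact ⟨t, ht1, ht⟩

theorem AffineMap.eq_of_isMaxOn_of_mem_intrinsicInterior {f : P →ᵃ[ℝ] ℝ}
    (hmax : IsMaxOn f K z) (hz : z ∈ intrinsicInterior ℝ K) (hy : y ∈ K) : f y = f z := by
  obtain ⟨t, ht1, ht⟩ := exists_one_lt_lineMap_mem_of_mem_intrinsicInterior hy hz
  have h := isMaxOn_iff.mp hmax _ ht
  rw [AffineMap.apply_lineMap, AffineMap.lineMap_apply_ring'] at h
  exact le_antisymm (isMaxOn_iff.mp hmax y hy) (by nlinarith)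

end IntrinsicInterior

theorem isMaxOn_add_iff {M N : Type*} [AddCommMonoid M] [AddCommMonoid N] [PartialOrder N]
    [IsOrderedCancelAddMonoid N] (f : M →+ N) {s t : Set M} {a b : M} (ha : a ∈ s)
    (hb : b ∈ t) : IsMaxOn f (s + t) (a + b) ↔ IsMaxOn f s a ∧ IsMaxOn f t b := by
  simp only [isMaxOn_iff, ← image2_add, forall_mem_image2, map_add]
  exact ⟨fun h => ⟨fun x hx => le_of_add_le_add_right (h x hx b hb),
    fun y hy => le_of_add_le_add_left (h a ha y hy)⟩,
    fun h x hx y hy => add_le_add (h.1 x hx) (h.2 y hy)⟩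

section InnerProductSpace

variable {F : Type*} [NormedAddCommGroup F] [InnerProductSpace ℝ F]

theorem Submodule.inner_reflection_right_of_mem (ξ : Submodule ℝ F) [ξ.HasOrthogonalProjection]
    {a : F} (ha : a ∈ ξ) (u : F) : ⟪a, ξ.reflection u⟫ = ⟪a, u⟫ := by
  rw [← ξ.reflection.inner_map_map, ξ.reflection_reflection, ξ.reflection_mem_subspace_eq_self ha]

theorem Submodule.inner_reflection_right_of_mem_orthogonal (ξ : Submodule ℝ F)
    [ξ.HasOrthogonalProjection] {b : F} (hb : b ∈ ξᗮ) (u : F) :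
    ⟪b, ξ.reflection u⟫ = -⟪b, u⟫ := by
  rw [← ξ.reflection.inner_map_map, ξ.reflection_reflection,
    ξ.reflection_mem_subspace_orthogonalComplement_eq_neg hb, inner_neg_left]

theorem Submodule.eqOn_inner_reflection_right_add (ξ : Submodule ℝ F) [ξ.HasOrthogonalProjection]
    {K₁ K₂ : Set F} (hK₁ : K₁ ⊆ ξ) (hK₂ : K₂ ⊆ ξᗮ) {u : F} (hu : ∀ b ∈ K₂, ⟪b, u⟫ = 0) :
    EqOn (⟪·, ξ.reflection u⟫) (⟪·, u⟫) (K₁ + K₂) := by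
  rintro _ ⟨a, ha, b, hb, rfl⟩
  simp only [inner_add_left, ξ.inner_reflection_right_of_mem (hK₁ ha),
    ξ.inner_reflection_right_of_mem_orthogonal (hK₂ hb), hu b hb, neg_zero]

theorem inner_eq_zero_of_isMaxOn_of_mem_intrinsicInterior {K : Set F} {u z b : F}
    (hmax : IsMaxOn (⟪·, u⟫) K z) (hz : z ∈ intrinsicInterior ℝ K) (h0 : (0 : F) ∈ K)
    (hb : b ∈ K) : ⟪b, u⟫ = 0 := by
  have hconst (c : F) (hc : c ∈ K) : ⟪c, u⟫ = ⟪z, u⟫ :=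
    AffineMap.eq_of_isMaxOn_of_mem_intrinsicInterior (f := ((innerₗ F).flip u).toAffineMap)
      hmax hz hc
  rw [hconst b hb, ← hconst 0 h0, inner_zero_left]

end InnerProductSpace

section Normals

variable {n : ℕ} {K : Set (E n)} {x u : E n}

theorem inner_eq_suppFn_iff_isMaxOn (hK : Bornology.IsBounded K) (hx : x ∈ K) :
    ⟪x, u⟫ = suppFn K u ↔ IsMaxOn (⟪·, u⟫) K x := by
  have hbdd : BddAbove ((⟪·, u⟫) '' K) := by
    rw [show (⟪·, u⟫) = innerSL ℝ u from funext fun y => real_inner_comm u y]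
    exact ((innerSL ℝ u).lipschitz.isBounded_image hK).bddAbove
  refine ⟨fun h => isMaxOn_iff.2 fun y hy => ?_, fun h => ?_⟩
  · exact h ▸ le_csSup hbdd (mem_image_of_mem _ hy)
  · exact (IsGreatest.csSup_eq ⟨mem_image_of_mem _ hx, forall_mem_image.2 (isMaxOn_iff.1 h)⟩).symm

theorem suppFn_add_of_forall_inner_eq_zero {K₂ : Set (E n)} (hK₂ : K₂.Nonempty)
    (h : ∀ b ∈ K₂, ⟪b, u⟫ = 0) : suppFn (K + K₂) u = suppFn K u := by
  have himage_add : (⟪·, u⟫) '' (K + K₂) = (⟪·, u⟫) '' K + (⟪·, u⟫) '' K₂ :=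
    image_add (AddMonoidHom.mk' (⟪·, u⟫) fun a b => inner_add_left a b u)
  have himage : (⟪·, u⟫) '' K₂ = 0 := (EqOn.image_eq h).trans (hK₂.image_const 0)
  rw [suppFn, suppFn, himage_add, himage, add_zero]

theorem gaussMap_eq (hu : ‖u‖ = 1 ∧ ⟪x, u⟫ = suppFn K u)
    (huniq : ∀ w : E n, ‖w‖ = 1 ∧ ⟪x, w⟫ = suppFn K w → w = u) : gaussMap K x = u := by
  have h : ∃! u : E n, ‖u‖ = 1 ∧ ⟪x, u⟫ = suppFn K u := ⟨u, hu, huniq⟩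
  rw [gaussMap, dif_pos h]
  exact huniq _ h.choose_spec.1

theorem relGaussMap_eq {ξ : Submodule ℝ (E n)} (hu : u ∈ ξ ∧ ‖u‖ = 1 ∧ ⟪x, u⟫ = suppFn K u)
    (huniq : ∀ w : E n, w ∈ ξ ∧ ‖w‖ = 1 ∧ ⟪x, w⟫ = suppFn K w → w = u) :
    relGaussMap ξ K x = u := by
  have h : ∃! u : E n, u ∈ ξ ∧ ‖u‖ = 1 ∧ ⟪x, u⟫ = suppFn K u := ⟨u, hu, huniq⟩
  rw [relGaussMap, dif_pos h]
  exact huniq _ h.choose_spec.1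

end Normals

theorem stmt8_general {n : ℕ} (ξ₁ ξ₂ : Submodule ℝ (E n)) (hperp : ξ₂ = ξ₁ᗮ)
    (K₁ K₂ : Set (E n)) (hK₁ξ : K₁ ⊆ (ξ₁ : Set (E n))) (hK₂ξ : K₂ ⊆ (ξ₂ : Set (E n)))
    (hK₁comp : IsCompact K₁) (hK₂comp : IsCompact K₂) (hK₂0 : (0 : E n) ∈ intrinsicInterior ℝ K₂)
    (y₁ y₂ : E n) (hy₁ : y₁ ∈ intrinsicFrontier ℝ K₁) (hy₂ : y₂ ∈ intrinsicInterior ℝ K₂)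
    (huniq : ∃! u : E n, ‖u‖ = 1 ∧ ⟪y₁ + y₂, u⟫ = suppFn (K₁ + K₂) u) :
    gaussMap (K₁ + K₂) (y₁ + y₂) ∈ ξ₁ ∧
      gaussMap (K₁ + K₂) (y₁ + y₂) = relGaussMap ξ₁ K₁ y₁ := by
  subst hperp
  have hy₁K : y₁ ∈ K₁ := intrinsicFrontier_subset hK₁comp.isClosed hy₁
  have hy₂K : y₂ ∈ K₂ := intrinsicInterior_subset hy₂
  have hmem : y₁ + y₂ ∈ K₁ + K₂ := add_mem_add hy₁K hy₂K
  have hnormal (w : E n) :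
      ⟪y₁ + y₂, w⟫ = suppFn (K₁ + K₂) w ↔ IsMaxOn (⟪·, w⟫) (K₁ + K₂) (y₁ + y₂) :=
    inner_eq_suppFn_iff_isMaxOn (hK₁comp.add hK₂comp).isBounded hmem
  obtain ⟨u, ⟨hu1, hu⟩, hu_uniq⟩ := huniq
  have hgauss : gaussMap (K₁ + K₂) (y₁ + y₂) = u := gaussMap_eq ⟨hu1, hu⟩ hu_uniq
  have hmax := (hnormal u).1 hu
  have hmax₂ : IsMaxOn (⟪·, u⟫) K₂ y₂ :=
    ((isMaxOn_add_iff (.mk' (⟪·, u⟫) fun a b => inner_add_left a b u) hy₁K hy₂K).1 hmax).2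
  have hK₂u (b : E n) (hb : b ∈ K₂) : ⟪b, u⟫ = 0 :=
    inner_eq_zero_of_isMaxOn_of_mem_intrinsicInterior hmax₂ hy₂ (intrinsicInterior_subset hK₂0) hb
  have huξ₁ : u ∈ ξ₁ := by
    have hR := ξ₁.eqOn_inner_reflection_right_add hK₁ξ hK₂ξ hK₂u
    rw [← ξ₁.reflection_eq_self_iff]
    refine hu_uniq _ ⟨by rwa [LinearIsometryEquiv.norm_map], (hnormal _).2 ?_⟩
    exact hmax.congr (Filter.eventuallyEq_principal.2 hR.symm) (hR hmem).symm
  have hrel (w : E n) (hw : w ∈ ξ₁) :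
      ⟪y₁ + y₂, w⟫ = suppFn (K₁ + K₂) w ↔ ⟪y₁, w⟫ = suppFn K₁ w := by
    have hw₂ (b : E n) (hb : b ∈ K₂) : ⟪b, w⟫ = 0 := ξ₁.inner_left_of_mem_orthogonal hw (hK₂ξ hb)
    rw [inner_add_left, hw₂ y₂ hy₂K, add_zero, suppFn_add_of_forall_inner_eq_zero ⟨y₂, hy₂K⟩ hw₂]
  refine ⟨hgauss ▸ huξ₁, hgauss.trans (relGaussMap_eq ?_ ?_).symm⟩
  · exact ⟨huξ₁, hu1, (hrel u huξ₁).1 hu⟩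
  · exact fun w ⟨hw, hw1, hwn⟩ => hu_uniq w ⟨hw1, (hrel w hw).2 hwn⟩

/-- At a point `y₁ + y₂` with `y₁ ∈ relbd K₁`, `y₂ ∈ relint K₂`, having a unique outer unit
normal, the outer unit normal of `K₁ + K₂` lies in `ξ₁` and equals the relative outer unit
normal of `K₁` at `y₁`. -/
theorem stmt8 {n : ℕ} (ξ₁ ξ₂ : Submodule ℝ (E n)) (hperp : ξ₂ = ξ₁ᗮ)
    (K₁ K₂ : Set (E n)) (hK₁ξ : K₁ ⊆ (ξ₁ : Set (E n))) (hK₂ξ : K₂ ⊆ (ξ₂ : Set (E n)))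
    (hK₁conv : Convex ℝ K₁) (hK₁comp : IsCompact K₁)
    (hK₂conv : Convex ℝ K₂) (hK₂comp : IsCompact K₂)
    (hK₁0 : (0 : E n) ∈ intrinsicInterior ℝ K₁) (hK₂0 : (0 : E n) ∈ intrinsicInterior ℝ K₂)
    (y₁ y₂ : E n) (hy₁ : y₁ ∈ intrinsicFrontier ℝ K₁) (hy₂ : y₂ ∈ intrinsicInterior ℝ K₂)
    (hbd : y₁ + y₂ ∈ frontier (K₁ + K₂))
    (huniq : ∃! u : E n, ‖u‖ = 1 ∧ ⟪y₁ + y₂, u⟫ = suppFn (K₁ + K₂) u) :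
    gaussMap (K₁ + K₂) (y₁ + y₂) ∈ ξ₁ ∧
      gaussMap (K₁ + K₂) (y₁ + y₂) = relGaussMap ξ₁ K₁ y₁ :=
  stmt8_general ξ₁ ξ₂ hperp K₁ K₂ hK₁ξ hK₂ξ hK₁comp hK₂comp hK₂0 y₁ y₂ hy₁ hy₂ huniq
end
end

section
/- Fix n ≥ 1 and suppose that for all o-symmetric convex bodies K, L in ℝⁿ the logarithmic Minkowski inequality (1/V(K)) ∫_{S^{n-1}} log(h_L/h_K) dV_K ≥ (1/n) log(V(L)/V(K)) holds, with equality if and only if K and L are dilatates or relative cylinders. Then the cone-volume measure determines the body up to cylinders: if K, L are o-symmetric convex bodies with V_K = V_L, then K = L or K and L are relative cylinders. -/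
noncomputable section

open MeasureTheory Set Metric
open scoped RealInnerProductSpace ENNReal Pointwise Classical

/-- The cone-volume measure of `K`: `V_K(ω) = (1/n) ∫_{ν_K⁻¹(ω)} x ⬝ ν_K(x) dH^{n-1}(x)`. -/
def coneVolMeasure {n : ℕ} (K : Set (E n)) : Measure (E n) :=
  ((n : ℝ≥0∞))⁻¹ • Measure.map (gaussMap K)
    (((μH[(n : ℝ) - 1]).restrict (frontier K)).withDensity fun x =>
      ENNReal.ofReal ⟪x, gaussMap K x⟫)

/-- `K` and `L` are relative cylinders: both are cylinders `K = ΣKᵢ`, `L = ΣLᵢ` over the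
same decomposition (each summand of dimension at least 1, dimensions summing to `n`),
with `Lᵢ` a dilatate of `Kᵢ` for each `i`. -/
def IsRelativeCylinder {n : ℕ} (K L : Set (E n)) : Prop :=
  ∃ (m : ℕ) (Ks Ls : Fin m → Set (E n)),
    1 < m ∧
    (∀ i, Convex ℝ (Ks i)) ∧ (∀ i, Convex ℝ (Ls i)) ∧
    (∀ i, 1 ≤ Module.finrank ℝ (affineSpan ℝ (Ks i)).direction) ∧
    (∑ i, Module.finrank ℝ (affineSpan ℝ (Ks i)).direction) = n ∧
    K = ∑ i, Ks i ∧ L = ∑ i, Ls i ∧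
    ∀ i, ∃ c : ℝ, 0 < c ∧ Ls i = c • Ks i


/- Applying the logarithmic Minkowski inequality to `K` and its dilatates `e • K`, `e⁻¹ • K`
pins the total mass of `V_K` to `V(K)`. Hence `V_K = V_L` forces `V(K) = V(L)`, so both
inequalities, for `(K, L)` and for `(L, K)`, have right-hand side `0` while their integrals are
negatives of each other: both are equalities. The equality case gives relative cylinders, or a
dilatate `L = c • K` of the same volume, i.e. `c = 1`. -/

theorem MeasureTheory.Measure.map_withDensity_apply_eq_zero {α β : Type*} [MeasurableSpace α]
    [MeasurableSpace β] {μ : Measure α} {f : α → ℝ≥0∞} {g : α → β} {s : Set β}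
    (hs : MeasurableSet s) (hf : ∀ x, g x ∈ s → f x = 0) :
    (μ.withDensity f).map g s = 0 := by
  set ν := μ.withDensity f
  by_cases hg : AEMeasurable g ν
  swap
  · rw [Measure.map_of_not_aemeasurable hg, Measure.coe_zero, Pi.zero_apply]
  -- `f` need not be measurable, so we pass to a measurable null set off which `g = hg.mk g`.
  set N := toMeasurable ν {x | ¬g x = hg.mk g x}
  have hN : ν N = 0 := by rw [measure_toMeasurable]; exact ae_iff.mp hg.ae_eq_mk
  have hM : MeasurableSet (hg.mk g ⁻¹' s \ N) :=
    (hg.measurable_mk hs).diff (measurableSet_toMeasurable _ _)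
  have hMN : ν (hg.mk g ⁻¹' s \ N) = 0 := by
    rw [withDensity_apply _ hM, setLIntegral_congr_fun hM (g := fun _ => 0), lintegral_zero]
    intro x ⟨hxs, hxN⟩
    have hgx : g x = hg.mk g x := by_contra fun h => hxN (subset_toMeasurable ν _ h)
    exact hf x (hgx ▸ hxs)
  rw [Measure.map_congr hg.ae_eq_mk, Measure.map_apply hg.measurable_mk hs]
  refine measure_mono_null (fun x hx => ?_) (measure_union_null hMN hN)
  by_cases hxN : x ∈ N
  exacts [Or.inr hxN, Or.inl ⟨hx, hxN⟩]

section ConeVolume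

open scoped Topology

variable {n : ℕ} {K L : Set (E n)}

lemma gaussMap_eq_zero_or_norm_eq_one (K : Set (E n)) (x : E n) :
    gaussMap K x = 0 ∨ ‖gaussMap K x‖ = 1 := by
  unfold gaussMap
  split
  · next h => exact Or.inr h.choose_spec.1.1
  · exact Or.inl rfl

lemma coneVolMeasure_ae_norm_eq_one (K : Set (E n)) :
    ∀ᵐ u ∂coneVolMeasure K, ‖u‖ = 1 := by
  have hs : MeasurableSet {u : E n | ¬‖u‖ = 1} :=
    (measurable_norm (measurableSet_singleton (1 : ℝ))).compl
  rw [ae_iff, coneVolMeasure, Measure.smul_apply, smul_eq_mul,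
    Measure.map_withDensity_apply_eq_zero hs, mul_zero]
  intro x hx
  rw [(gaussMap_eq_zero_or_norm_eq_one K x).resolve_right hx, inner_zero_right,
    ENNReal.ofReal_zero]

lemma suppFn_smul {t : ℝ} (ht : 0 ≤ t) (K : Set (E n)) (u : E n) :
    suppFn (t • K) u = t * suppFn K u := by
  have him : (fun y => ⟪y, u⟫) '' (t • K) = t • ((fun y => ⟪y, u⟫) '' K) := by
    rw [← image_smul, ← image_smul, image_image, image_image]
    congr 1
    funext y
    exact real_inner_smul_left y u t
  rw [suppFn, him, Real.sSup_smul_of_nonneg ht, smul_eq_mul, suppFn]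

lemma suppFn_pos (hK : IsCompact K) (h0 : (0 : E n) ∈ interior K) {u : E n} (hu : u ≠ 0) :
    0 < suppFn K u := by
  have hlim : Filter.Tendsto (fun t : ℝ => t • u) (𝓝[>] 0) (𝓝 0) := by
    have : Continuous fun t : ℝ => t • u := continuous_id.smul continuous_const
    simpa using (this.tendsto' 0 0 (zero_smul ℝ u)).mono_left nhdsWithin_le_nhds
  obtain ⟨t, htK, ht⟩ :=
    ((hlim.eventually (mem_interior_iff_mem_nhds.mp h0)).and self_mem_nhdsWithin).exists
  have hbdd : BddAbove ((fun y => ⟪y, u⟫) '' K) :=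
    (hK.image (continuous_id.inner continuous_const)).bddAbove
  calc 0 < t * ‖u‖ ^ 2 := mul_pos ht (by positivity)
    _ = ⟪t • u, u⟫ := by rw [real_inner_smul_left, real_inner_self_eq_norm_sq]
    _ ≤ suppFn K u := le_csSup hbdd (mem_image_of_mem _ htK)

lemma volume_toReal_pos (hK : IsCompact K) (h0 : (interior K).Nonempty) :
    0 < (volume K).toReal :=
  ENNReal.toReal_pos (Measure.measure_pos_of_nonempty_interior volume h0).ne'
    hK.measure_lt_top.ne

lemma volume_smul_toReal {t : ℝ} (ht : 0 ≤ t) (K : Set (E n)) :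
    (volume (t • K)).toReal = t ^ n * (volume K).toReal := by
  rw [Measure.addHaar_smul_of_nonneg volume ht K, ENNReal.toReal_mul,
    ENNReal.toReal_ofReal (pow_nonneg ht _), finrank_euclideanSpace_fin]

lemma eq_one_of_volume_smul_eq (hn : n ≠ 0) (hK : 0 < (volume K).toReal) {c : ℝ} (hc : 0 < c)
    (h : (volume (c • K)).toReal = (volume K).toReal) : c = 1 := by
  rw [volume_smul_toReal hc.le, mul_eq_right₀ hK.ne'] at h
  exact (pow_eq_one_iff_of_nonneg hc.le hn).mp h

lemma integral_log_suppFn_smul_div (hK : IsCompact K) (h0 : (0 : E n) ∈ interior K) {t : ℝ}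
    (ht : 0 < t) :
    ∫ u, Real.log (suppFn (t • K) u / suppFn K u) ∂coneVolMeasure K =
      (coneVolMeasure K univ).toReal * Real.log t := by
  rw [← smul_eq_mul, ← measureReal_def, ← integral_const]
  refine integral_congr_ae ((coneVolMeasure_ae_norm_eq_one K).mono fun u hu => ?_)
  have hpos := suppFn_pos hK h0 (norm_ne_zero_iff.mp (hu.trans_ne one_ne_zero))
  dsimp only
  rw [suppFn_smul ht.le, mul_div_assoc, div_self hpos.ne', mul_one]

lemma log_volume_smul_div (hn : n ≠ 0) (hK : 0 < (volume K).toReal) {t : ℝ} (ht : 0 < t) :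
    (n : ℝ)⁻¹ * Real.log ((volume (t • K)).toReal / (volume K).toReal) = Real.log t := by
  rw [volume_smul_toReal ht.le, mul_div_assoc, div_self hK.ne', mul_one, Real.log_pow,
    inv_mul_cancel_left₀ (Nat.cast_ne_zero.mpr hn)]

lemma coneVolMeasure_univ_eq_volume (hn : n ≠ 0) (hK : IsCompact K)
    (h0 : (0 : E n) ∈ interior K)
    (hineq : ∀ t : ℝ, 0 < t →
      (volume K).toReal⁻¹ * (∫ u, Real.log (suppFn (t • K) u / suppFn K u) ∂coneVolMeasure K) ≥
        (n : ℝ)⁻¹ * Real.log ((volume (t • K)).toReal / (volume K).toReal)) :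
    (coneVolMeasure K univ).toReal = (volume K).toReal := by
  have hvol := volume_toReal_pos hK ⟨0, h0⟩
  have key : ∀ t : ℝ, 0 < t →
      Real.log t ≤ (volume K).toReal⁻¹ * (coneVolMeasure K univ).toReal * Real.log t := by
    intro t ht
    have := hineq t ht
    rwa [integral_log_suppFn_smul_div hK h0 ht, log_volume_smul_div hn hvol ht, ← mul_assoc]
      at this
  have hup := key (Real.exp (-1)) (Real.exp_pos _)
  have hlow := key (Real.exp 1) (Real.exp_pos _)
  rw [Real.log_exp] at hup hlow
  rw [← div_eq_one_iff_eq hvol.ne', div_eq_inv_mul]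
  linarith

lemma integral_log_suppFn_div_swap (hV : coneVolMeasure K = coneVolMeasure L) :
    ∫ u, Real.log (suppFn K u / suppFn L u) ∂coneVolMeasure L =
      -∫ u, Real.log (suppFn L u / suppFn K u) ∂coneVolMeasure K := by
  rw [← hV, ← integral_neg]
  congr with u
  rw [← Real.log_inv, inv_div]

lemma integral_log_suppFn_div_eq_zero (hV : coneVolMeasure K = coneVolMeasure L)
    (hvol : (volume K).toReal = (volume L).toReal) (hK : 0 < (volume K).toReal)
    (hKL : (volume K).toReal⁻¹ * (∫ u, Real.log (suppFn L u / suppFn K u) ∂coneVolMeasure K) ≥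
      (n : ℝ)⁻¹ * Real.log ((volume L).toReal / (volume K).toReal))
    (hLK : (volume L).toReal⁻¹ * (∫ u, Real.log (suppFn K u / suppFn L u) ∂coneVolMeasure L) ≥
      (n : ℝ)⁻¹ * Real.log ((volume K).toReal / (volume L).toReal)) :
    ∫ u, Real.log (suppFn L u / suppFn K u) ∂coneVolMeasure K = 0 := by
  rw [← hvol, div_self hK.ne', Real.log_one, mul_zero, integral_log_suppFn_div_swap hV,
    ge_iff_le, mul_nonneg_iff_of_pos_left (inv_pos.mpr hK)] at *
  linarith

end ConeVolume

/-- If the logarithmic Minkowski inequality (with its equality cases) holds for all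
`o`-symmetric convex bodies in `ℝⁿ`, then the cone-volume measure determines the body up to
relative cylinders. -/
theorem stmt17 {n : ℕ} (hn : 1 ≤ n)
    (H : ∀ K L : Set (E n),
      Convex ℝ K → IsCompact K → (0 : E n) ∈ interior K → K = -K →
      Convex ℝ L → IsCompact L → (0 : E n) ∈ interior L → L = -L →
      (volume K).toReal⁻¹ * (∫ u, Real.log (suppFn L u / suppFn K u) ∂coneVolMeasure K) ≥
          (n : ℝ)⁻¹ * Real.log ((volume L).toReal / (volume K).toReal) ∧
        ((volume K).toReal⁻¹ * (∫ u, Real.log (suppFn L u / suppFn K u) ∂coneVolMeasure K) =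
            (n : ℝ)⁻¹ * Real.log ((volume L).toReal / (volume K).toReal) ↔
          (∃ c : ℝ, 0 < c ∧ L = c • K) ∨ IsRelativeCylinder K L)) :
    ∀ K L : Set (E n),
      Convex ℝ K → IsCompact K → (0 : E n) ∈ interior K → K = -K →
      Convex ℝ L → IsCompact L → (0 : E n) ∈ interior L → L = -L →
      coneVolMeasure K = coneVolMeasure L →
      K = L ∨ IsRelativeCylinder K L := by
  intro K L hKc hKcp hK0 hKs hLc hLcp hL0 hLs hV
  have hn0 : n ≠ 0 := by omega
  have mass : ∀ M : Set (E n), Convex ℝ M → IsCompact M → (0 : E n) ∈ interior M →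
      M = -M → (coneVolMeasure M univ).toReal = (volume M).toReal :=
    fun M hc hcp h0 hs => coneVolMeasure_univ_eq_volume hn0 hcp h0 fun t ht =>
      (H M (t • M) hc hcp h0 hs (hc.smul t) (hcp.smul t)
        (by rw [interior_smul₀ ht.ne']; exact ⟨0, h0, smul_zero t⟩)
        (by rw [← smul_set_neg, ← hs])).1
  have hvol : (volume K).toReal = (volume L).toReal := by
    rw [← mass K hKc hKcp hK0 hKs, ← mass L hLc hLcp hL0 hLs, hV]
  have hKpos := volume_toReal_pos hKcp ⟨0, hK0⟩
  have hKL := H K L hKc hKcp hK0 hKs hLc hLcp hL0 hLs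
  have hI := integral_log_suppFn_div_eq_zero hV hvol hKpos hKL.1
    (H L K hLc hLcp hL0 hLs hKc hKcp hK0 hKs).1
  rcases hKL.2.mp (by rw [hI, ← hvol, div_self hKpos.ne', Real.log_one, mul_zero, mul_zero])
    with ⟨c, hc, rfl⟩ | hcyl
  · left
    rw [eq_one_of_volume_smul_eq hn0 hKpos hc hvol.symm, one_smul]
  · exact Or.inr hcyl
end
end
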